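/- For the ternary controller gain k̄ ≥ (1/b₀)·((d+1)/d)·w̄, for all b ≥ b₀ and all ζ with |ζ| ≥ η, and for all (x,ζ) with ζ² < d+1, the bound w̄|ζ| - 2 k̄ b₀ (d/(d+1)) |ζ| ≤ -w̄|ζ| ≤ -w̄ η holds; moreover, since d(d+1)/(d+1-ζ²)² ≥ d/(d+1) for ζ² ∈ [0, d+1), the term -2 (d(d+1)/(d+1-ζ²)²) ζ b k̄ sgn(ζ) |ζ| ≤ -2 k̄ b₀ (d/(d+1)) ζ². -/
import Mathlib


/-- For the ternary controller gain k̄ ≥ (1/b₀)((d+1)/d)w̄, for all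
b ≥ b₀ and |ζ| ≥ η with ζ² < d+1:
w̄|ζ| - 2k̄b₀(d/(d+1))|ζ| ≤ -w̄|ζ| ≤ -w̄η, and since d(d+1)/(d+1-ζ²)² ≥ d/(d+1),
-2(d(d+1)/(d+1-ζ²)²)ζ b k̄ sgn(ζ)|ζ| ≤ -2k̄b₀(d/(d+1))ζ². -/
theorem ternary_controller_inequality
    (d b₀ w η k : ℝ) (hd : 1 ≤ d) (hb₀ : 0 < b₀) (hw : 0 < w) (hη : 0 < η)
    (hk : 1 / b₀ * ((d + 1) / d) * w ≤ k)
    (b ζ : ℝ) (hb : b₀ ≤ b) (hζ : η ≤ |ζ|) (hζdom : ζ ^ 2 < d + 1) :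
    (w * |ζ| - 2 * k * b₀ * (d / (d + 1)) * |ζ| ≤ -(w * |ζ|)) ∧
    (-(w * |ζ|) ≤ -(w * η)) ∧
    (d / (d + 1) ≤ d * (d + 1) / (d + 1 - ζ ^ 2) ^ 2) ∧
    (-2 * (d * (d + 1) / (d + 1 - ζ ^ 2) ^ 2) * ζ * b * k * Real.sign ζ * |ζ|
      ≤ -2 * k * b₀ * (d / (d + 1)) * ζ ^ 2) := by
  have hd0 : (0:ℝ) < d := lt_of_lt_of_le one_pos hd
  have hd1 : (0:ℝ) < d + 1 := by linarith
  have hζne : ζ ≠ 0 := by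
    intro h; rw [h, abs_zero] at hζ; linarith
  have habs : 0 < |ζ| := abs_pos.mpr hζne
  -- key gain bound: w ≤ k * b₀ * (d/(d+1))
  have hgain : w ≤ k * b₀ * (d / (d + 1)) := by
    have h1 : 1 / b₀ * ((d + 1) / d) * w * (b₀ * (d / (d + 1))) ≤
        k * (b₀ * (d / (d + 1))) := by
      apply mul_le_mul_of_nonneg_right hk
      positivity
    have h2 : 1 / b₀ * ((d + 1) / d) * w * (b₀ * (d / (d + 1))) = w := by
      field_simp
    rw [h2] at h1; linarith [h1]
  have hden : 0 < d + 1 - ζ ^ 2 := by linarith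
  have hfrac : d / (d + 1) ≤ d * (d + 1) / (d + 1 - ζ ^ 2) ^ 2 := by
    rw [div_le_div_iff₀ hd1 (by positivity)]
    have hsq : (d + 1 - ζ ^ 2) ^ 2 ≤ (d + 1) ^ 2 := by
      apply pow_le_pow_left₀ (le_of_lt hden); nlinarith [sq_nonneg ζ]
    nlinarith
  refine ⟨?_, ?_, hfrac, ?_⟩
  · nlinarith [mul_le_mul_of_nonneg_right hgain (le_of_lt habs)]
  · nlinarith
  · have hsign : ζ * Real.sign ζ = |ζ| := by
      rcases lt_or_gt_of_ne hζne with h | h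
      · rw [Real.sign_of_neg h, abs_of_neg h]; ring
      · rw [Real.sign_of_pos h, abs_of_pos h]; ring
    have h2 : ζ * Real.sign ζ * |ζ| = ζ ^ 2 := by
      rw [hsign, ← sq_abs]; ring
    have hlhs : -2 * (d * (d + 1) / (d + 1 - ζ ^ 2) ^ 2) * ζ * b * k * Real.sign ζ * |ζ|
        = -2 * (d * (d + 1) / (d + 1 - ζ ^ 2) ^ 2) * b * k * ζ ^ 2 := by
      linear_combination (-2 * (d * (d + 1) / (d + 1 - ζ ^ 2) ^ 2) * b * k) * h2
    rw [hlhs]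
    have hk0 : 0 < k := by
      by_contra h
      push_neg at h
      nlinarith [mul_pos hb₀ (div_pos hd0 hd1)]
    have hb0 : 0 < b := lt_of_lt_of_le hb₀ hb
    have h1 : k * b₀ * (d / (d + 1)) ≤ k * b * (d * (d + 1) / (d + 1 - ζ ^ 2) ^ 2) := by
      have := mul_le_mul hb hfrac (by positivity) (le_of_lt hb0)
      nlinarith [hk0]
    nlinarith [sq_nonneg ζ, hk0, h1, sq_abs ζ]
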